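/- Canonical abstraction is the most precise embedding into a canonically-named abstract structure: if C embeds into a 3-valued structure S via f = canon (so U_S = {canon(u) : u ∈ U_C}), then for every predicate p and tuple c⃗ of abstract objects, ι_{β(C)}(p)(c⃗) ⊑ ι_S(p)(c⃗) in the information order (where x ⊑ x, 0 ⊑ 1/2, 1 ⊑ 1/2). -/

import Mathlib

/-- Kleene's three truth values 0, 1/2, 1. -/
inductive TV where
  | zero | half | one
deriving DecidableEq

/-- The information order: `x ⊑ x`, `0 ⊑ 1/2`, `1 ⊑ 1/2`. -/
def TV.infoLe (a b : TV) : Prop := a = b ∨ b = TV.half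

open Classical in
/-- Kleene's join: `⊔V = v` if `V = {v}`, else `1/2`. -/
noncomputable def kJoin (V : Set TV) : TV :=
  if h : ∃ v, V = {v} then h.choose else TV.half


section Structures

variable {P : Type*} {U U' U'' : Type*}

/-- An interpretation of predicates `P` of arities `ar` over a universe `U`,
with truth values in `TV`. -/
abbrev Interp (ar : P → ℕ) (U : Type*) := (p : P) → (Fin (ar p) → U) → TV

/-- A 2-valued interpretation never takes the value 1/2. -/
def TwoValued (ar : P → ℕ) (ι : Interp ar U) : Prop := ∀ p t, ι p t ≠ TV.half

/-- The canonical name of `u`: the set of unary predicates that hold at `u`. -/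
def canon (ar : P → ℕ) (ι : Interp ar U) (u : U) : Set P :=
  {p | ar p = 1 ∧ ι p (fun _ => u) = TV.one}

/-- The universe of the canonical abstraction `β(C)`: all canonical names. -/
def betaUniv (ar : P → ℕ) (ι : Interp ar U) : Type _ :=
  {s : Set P // ∃ u, canon ar ι u = s}

/-- The interpretation of `β(C)` on tuples of sets of predicates:
Kleene join over all concrete tuples with the given canonical names. -/
noncomputable def betaInterpSet (ar : P → ℕ) (ι : Interp ar U)
    (p : P) (c : Fin (ar p) → Set P) : TV :=
  kJoin {v | ∃ t : Fin (ar p) → U, (∀ i, canon ar ι (t i) = c i) ∧ ι p t = v}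

/-- The interpretation of the canonical abstraction `β(C)`. -/
noncomputable def betaInterp (ar : P → ℕ) (ι : Interp ar U) :
    Interp ar (betaUniv ar ι) :=
  fun p c => betaInterpSet ar ι p (fun i => (c i).val)

/-- The canonical map from `C` into `β(C)`, sending `u` to `canon(u)`. -/
def canonMap (ar : P → ℕ) (ι : Interp ar U) (u : U) : betaUniv ar ι :=
  ⟨canon ar ι u, u, rfl⟩

/-- `C` is embedded in `S` via `f`: `f` is surjective and every predicate value is
either preserved or becomes 1/2. -/
def Embeds (ar : P → ℕ) (ι : Interp ar U) (ι' : Interp ar U') (f : U → U') : Prop :=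
  Function.Surjective f ∧
    ∀ p (t : Fin (ar p) → U),
      ι p t = ι' p (fun i => f (t i)) ∨ ι' p (fun i => f (t i)) = TV.half

/-- An isomorphism of 2-valued structures: a bijection preserving interpretations. -/
def IsIso (ar : P → ℕ) (ι : Interp ar U) (ι' : Interp ar U') (φ : U → U') : Prop :=
  Function.Bijective φ ∧ ∀ p (t : Fin (ar p) → U), ι p t = ι' p (fun i => φ (t i))

end Structures

/-!
If `ιS p c` is definite, the embedding forces every concrete tuple `t` with `canon ∘ t = c`
to take exactly that value. Such tuples exist because every canonical name is realised, so the
Kleene join defining `β(C)` is a join over a singleton and returns the same value.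
-/

@[simp]
theorem kJoin_singleton (v : TV) : kJoin {v} = v := by
  have h : ∃ w, ({v} : Set TV) = {w} := ⟨v, rfl⟩
  rw [kJoin, dif_pos h]
  exact (Set.singleton_eq_singleton_iff.mp h.choose_spec).symm

section Canonical

variable {P U : Type*} (ar : P → ℕ) (ι : Interp ar U)

theorem canonMap_surjective : Function.Surjective (canonMap ar ι) := by
  rintro ⟨s, u, rfl⟩
  exact ⟨u, rfl⟩

theorem betaInterp_eq_of_forall {p : P} {c : Fin (ar p) → betaUniv ar ι} {v : TV}
    (h : ∀ t : Fin (ar p) → U, canonMap ar ι ∘ t = c → ι p t = v) :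
    betaInterp ar ι p c = v := by
  have hcanon : ∀ t : Fin (ar p) → U,
      (∀ i, canon ar ι (t i) = (c i).val) ↔ canonMap ar ι ∘ t = c := fun t => by
    rw [funext_iff]
    exact forall_congr' fun i => ⟨fun h => Subtype.ext h, congrArg Subtype.val⟩
  have hvalues :
      {w | ∃ t : Fin (ar p) → U, (∀ i, canon ar ι (t i) = (c i).val) ∧ ι p t = w} = {v} := by
    obtain ⟨t₀, ht₀⟩ := (canonMap_surjective ar ι).comp_left c
    refine Set.eq_singleton_iff_unique_mem.mpr ⟨⟨t₀, (hcanon t₀).mpr ht₀, h t₀ ht₀⟩, ?_⟩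
    rintro w ⟨t, ht, rfl⟩
    exact h t ((hcanon t).mp ht)
  rw [betaInterp, betaInterpSet, hvalues, kJoin_singleton]

end Canonical

theorem Embeds.eq_of_ne_half {P U U' : Type*} {ar : P → ℕ} {ι : Interp ar U} {ι' : Interp ar U'}
    {f : U → U'} (hemb : Embeds ar ι ι' f) {p : P} {t : Fin (ar p) → U}
    (ht : ι' p (f ∘ t) ≠ TV.half) : ι p t = ι' p (f ∘ t) :=
  (hemb.2 p t).resolve_right ht

theorem betaInterp_most_precise_general {P U : Type*} (ar : P → ℕ)
    (ι : Interp ar U)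
    (ιS : Interp ar (betaUniv ar ι))
    (hemb : Embeds ar ι ιS (canonMap ar ι)) :
    ∀ (p : P) (c : Fin (ar p) → betaUniv ar ι),
      TV.infoLe (betaInterp ar ι p c) (ιS p c) := by
  intro p c
  by_cases hhalf : ιS p c = TV.half
  · exact Or.inr hhalf
  · refine Or.inl (betaInterp_eq_of_forall ar ι ?_)
    rintro t rfl
    exact hemb.eq_of_ne_half hhalf

/-- `β(C)` is the most precise canonically-named abstraction: any `S` on the
canonical names in which `C` embeds via `canon` is less precise pointwise. -/
theorem betaInterp_most_precise {P U : Type*} (ar : P → ℕ)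
    (ι : Interp ar U) (h2 : TwoValued ar ι)
    (ιS : Interp ar (betaUniv ar ι))
    (hemb : Embeds ar ι ιS (canonMap ar ι)) :
    ∀ (p : P) (c : Fin (ar p) → betaUniv ar ι),
      TV.infoLe (betaInterp ar ι p c) (ιS p c) :=
  betaInterp_most_precise_general ar ι ιS hemb
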